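/- For any nonnegative integers x and y, the self-duality symmetry ∑_{s=0}^{y} φ_{q,μ,ν}(s|y) q^{s x} = ∑_{t=0}^{x} φ_{q,μ,ν}(t|x) q^{t y} holds, where φ_{q,μ,ν}(s|y) = μ^s ((ν/μ;q)_s (μ;q)_{y−s}/(ν;q)_y) ((q;q)_y/((q;q)_s (q;q)_{y−s})). -/

import Mathlib

open Filter Topology MeasureTheory

/-- Finite q-Pochhammer symbol `(a;q)_n`. -/
noncomputable def qPoch (a q : ℝ) (n : ℕ) : ℝ := ∏ i ∈ Finset.range n, (1 - a * q ^ i)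

/-- Infinite q-Pochhammer symbol `(a;q)_∞`. -/
noncomputable def qPochInf (a q : ℝ) : ℝ := ∏' i : ℕ, (1 - a * q ^ i)

/-- The q-beta-binomial weight `φ_{q,μ,ν}(s|y)`. -/
noncomputable def phiW (q μ ν : ℝ) (s y : ℕ) : ℝ :=
  μ ^ s * (qPoch (ν / μ) q s * qPoch μ q (y - s) / qPoch ν q y) *
    (qPoch q q y / (qPoch q q s * qPoch q q (y - s)))

/-- The weight `φ_{q,μ,ν}(s|∞)`. -/
noncomputable def phiInfW (q μ ν : ℝ) (s : ℕ) : ℝ :=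
  μ ^ s * (qPoch (ν / μ) q s / qPoch q q s) * (qPochInf μ q / qPochInf ν q)

/-- The q-hypergeometric weight `ψ_{q,a,b,c}(p)`. -/
noncomputable def psiW (q a b c : ℝ) (p : ℕ) : ℝ :=
  (c / (a * b)) ^ p * (qPoch a q p * qPoch b q p / (qPoch q q p * qPoch c q p)) *
    (qPochInf c q * qPochInf (c / (a * b)) q / (qPochInf (c / a) q * qPochInf (c / b) q))

/-- The q-Hahn PushTASEP update probability `P_{ℓ,g}(L)`. -/
noncomputable def Phahn (q μ ν : ℝ) (ℓ g L : ℕ) : ℝ :=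
  ∑ p ∈ Finset.range (min ℓ L + 1),
    phiW q⁻¹ (q ^ g) (μ * ν * q ^ ((g : ℤ) - 1)) p ℓ *
      psiW q (ν * μ⁻¹ * q ^ p) (ν * q ^ g) (ν ^ 2 * q ^ (g + p)) (L - p)

/-!
Write `H(x, y) = (ν;q)_y ∑_s φ(s|y) q^{sx}`. Pascal's rule for the q-binomial shows that, for fixed
`x`, `H` satisfies the recurrence `F(x, y+1) = (1 - ν q^{x+y}) F(x, y) + μ q^y (q^x - 1) F(x-1, y)`
with `F(x, 0) = 1`. So does the expansion `∑_k a_k (ν q^k;q)_{y-k} E_k(x) E_k(y)` in the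
q-descending factorials `E_k(x) = ∏_{i<k} (1 - q^{x-i})`, where
`a_k = ∏_{j<k} q^j (ν q^j - μ) / (q;q)_k` is fitted so that the recurrence holds. Hence the two agree, and dividing by `(ν;q)_y = (ν;q)_k (ν q^k;q)_{y-k}` gives
`∑_k a_k E_k(x) E_k(y) / (ν;q)_k`, which is symmetric in `x` and `y`.
-/

open Finset

theorem sum_range_succ_mul_eq_add_shift {R : Type*} [CommRing R] (a b c e : ℕ → R) (n : ℕ)
    (h0 : c 0 = a 0) (hsucc : ∀ s ≤ n, c (s + 1) = a (s + 1) + b s) (hlast : a (n + 1) = 0) :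
    ∑ s ∈ range (n + 2), c s * e s = ∑ s ∈ range (n + 1), (a s * e s + b s * e (s + 1)) := by
  have ha : ∑ s ∈ range (n + 1), a s * e s
      = ∑ s ∈ range (n + 1), a (s + 1) * e (s + 1) + a 0 * e 0 := by
    simpa [sum_range_succ _ (n + 1), hlast] using sum_range_succ' (fun s => a s * e s) (n + 1)
  calc ∑ s ∈ range (n + 2), c s * e s
      = ∑ s ∈ range (n + 1), (a (s + 1) * e (s + 1) + b s * e (s + 1)) + a 0 * e 0 := by
        rw [sum_range_succ', h0]
        refine congrArg (· + _) (sum_congr rfl fun s hs => ?_)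
        rw [hsucc s (mem_range_succ_iff.1 hs), add_mul]
    _ = _ := by rw [sum_add_distrib, sum_add_distrib, ha]; ring

section QPochhammer

@[simp]
theorem qPoch_zero (a q : ℝ) : qPoch a q 0 = 1 := prod_range_zero _

theorem qPoch_succ (a q : ℝ) (n : ℕ) : qPoch a q (n + 1) = qPoch a q n * (1 - a * q ^ n) :=
  prod_range_succ _ _

theorem qPoch_one (a q : ℝ) : qPoch a q 1 = 1 - a := by
  simp [qPoch]

theorem qPoch_add (a q : ℝ) (m n : ℕ) :
    qPoch a q (m + n) = qPoch a q m * qPoch (a * q ^ m) q n := by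
  simp only [qPoch, prod_range_add, pow_add, mul_assoc]

theorem qPoch_succ_ne_zero {q : ℝ} {n : ℕ} (h : qPoch q q (n + 1) ≠ 0) :
    qPoch q q n ≠ 0 ∧ 1 - q ^ (n + 1) ≠ 0 := by
  rwa [qPoch_succ, mul_ne_zero_iff, ← pow_succ'] at h

/-- The q-analogue of `Nat.descFactorial`. For `x < k` the truncated subtraction makes the factor
`i = x` equal to `1 - q ^ 0 = 0`, so the product vanishes as it should. -/
noncomputable def qDescFactorial (q : ℝ) (x k : ℕ) : ℝ := ∏ i ∈ range k, (1 - q ^ (x - i))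

@[simp]
theorem qDescFactorial_zero (q : ℝ) (x : ℕ) : qDescFactorial q x 0 = 1 := prod_range_zero _

theorem qDescFactorial_succ (q : ℝ) (x k : ℕ) :
    qDescFactorial q x (k + 1) = qDescFactorial q x k * (1 - q ^ (x - k)) :=
  prod_range_succ _ _

theorem qDescFactorial_add (q : ℝ) (x a b : ℕ) :
    qDescFactorial q x (a + b) = qDescFactorial q x a * qDescFactorial q (x - a) b := by
  simp only [qDescFactorial, prod_range_add, Nat.sub_sub]

theorem succ_qDescFactorial_succ (q : ℝ) (x k : ℕ) :
    qDescFactorial q (x + 1) (k + 1) = (1 - q ^ (x + 1)) * qDescFactorial q x k := by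
  rw [add_comm k, qDescFactorial_add, Nat.add_sub_cancel]
  simp [qDescFactorial]

theorem qDescFactorial_eq_zero_of_lt (q : ℝ) {x k : ℕ} (h : x < k) : qDescFactorial q x k = 0 :=
  prod_eq_zero (mem_range.2 h) (by simp)

theorem qDescFactorial_self (q : ℝ) (n : ℕ) : qDescFactorial q n n = qPoch q q n := by
  induction n with
  | zero => rfl
  | succ n ih => rw [succ_qDescFactorial_succ, ih, qPoch_succ, ← pow_succ', mul_comm]

theorem qDescFactorial_mul_qPoch (q : ℝ) {n k : ℕ} (h : k ≤ n) :
    qDescFactorial q n k * qPoch q q (n - k) = qPoch q q n := by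
  obtain ⟨m, rfl⟩ := Nat.exists_eq_add_of_le h
  rw [← qDescFactorial_self, ← qDescFactorial_self, Nat.add_sub_cancel_left, qDescFactorial_add,
    Nat.add_sub_cancel_left]

theorem pow_mul_qDescFactorial (q : ℝ) (x k : ℕ) :
    q ^ x * qDescFactorial q x k = q ^ k * (qDescFactorial q x k - qDescFactorial q x (k + 1)) := by
  rcases lt_or_ge x k with h | h
  · rw [qDescFactorial_eq_zero_of_lt q h, qDescFactorial_eq_zero_of_lt q (h.trans k.lt_succ_self)]
    ring
  · rw [qDescFactorial_succ, ← Nat.add_sub_cancel' h, pow_add, Nat.add_sub_cancel_left]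
    ring

theorem sub_one_mul_qDescFactorial_pred (q : ℝ) (x k : ℕ) :
    (q ^ x - 1) * qDescFactorial q (x - 1) k = -qDescFactorial q x (k + 1) := by
  cases x with
  | zero => simp [qDescFactorial_eq_zero_of_lt q k.succ_pos]
  | succ x => rw [succ_qDescFactorial_succ, Nat.add_sub_cancel]; ring

/-- The q-binomial coefficient `(q;q)_n / ((q;q)_k (q;q)_{n-k})`, written without `(q;q)_{n-k}`
so that it is `0` for `k > n`. -/
noncomputable def qBinom (q : ℝ) (n k : ℕ) : ℝ := qDescFactorial q n k / qPoch q q k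

@[simp]
theorem qBinom_zero_right (q : ℝ) (n : ℕ) : qBinom q n 0 = 1 := by
  simp [qBinom, qPoch]

theorem qBinom_eq_zero_of_lt (q : ℝ) {n k : ℕ} (h : n < k) : qBinom q n k = 0 := by
  rw [qBinom, qDescFactorial_eq_zero_of_lt q h, zero_div]

theorem qBinom_eq_div (q : ℝ) {n k : ℕ} (h : k ≤ n) (hk : qPoch q q k ≠ 0)
    (hnk : qPoch q q (n - k) ≠ 0) :
    qBinom q n k = qPoch q q n / (qPoch q q k * qPoch q q (n - k)) := by
  rw [qBinom, ← qDescFactorial_mul_qPoch q h]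
  field_simp

theorem qBinom_succ_succ (q : ℝ) (n k : ℕ) (hq : qPoch q q (k + 1) ≠ 0) :
    qBinom q (n + 1) (k + 1) = qBinom q n (k + 1) + q ^ (n - k) * qBinom q n k := by
  rcases lt_or_ge n k with h | h
  · simp [qBinom_eq_zero_of_lt q h, qBinom_eq_zero_of_lt q (Nat.succ_lt_succ h),
      qBinom_eq_zero_of_lt q (h.trans k.lt_succ_self)]
  obtain ⟨hk, hk1⟩ := qPoch_succ_ne_zero hq
  obtain ⟨m, rfl⟩ := Nat.exists_eq_add_of_le h
  rw [qBinom, qBinom, qBinom, succ_qDescFactorial_succ, qDescFactorial_succ, qPoch_succ,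
    ← pow_succ', Nat.add_sub_cancel_left]
  field_simp
  ring

end QPochhammer

section QHahn

noncomputable def qHahnSum (q μ ν : ℝ) (x y : ℕ) : ℝ :=
  ∑ s ∈ range (y + 1),
    μ ^ s * qPoch (ν / μ) q s * qPoch μ q (y - s) * qBinom q y s * q ^ (s * x)

noncomputable def dualCoeff (q μ ν : ℝ) (k : ℕ) : ℝ :=
  (∏ j ∈ range k, q ^ j * (ν * q ^ j - μ)) / qPoch q q k

noncomputable def qHahnDualSum (q μ ν : ℝ) (x y : ℕ) : ℝ :=
  ∑ k ∈ range (y + 1), dualCoeff q μ ν k * qPoch (ν * q ^ k) q (y - k) *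
    qDescFactorial q y k * qDescFactorial q x k

variable {q μ ν : ℝ}

theorem pow_succ_mul_qPoch_div_succ (hμ : μ ≠ 0) (s : ℕ) :
    μ ^ (s + 1) * qPoch (ν / μ) q (s + 1) = μ ^ s * qPoch (ν / μ) q s * (μ - ν * q ^ s) := by
  rw [qPoch_succ]
  field_simp
  ring

theorem dualCoeff_succ_mul {k : ℕ} (hq : qPoch q q (k + 1) ≠ 0) :
    dualCoeff q μ ν (k + 1) * (1 - q ^ (k + 1)) = q ^ k * (ν * q ^ k - μ) * dualCoeff q μ ν k := by
  rw [dualCoeff, dualCoeff, prod_range_succ, qPoch_succ, ← pow_succ', mul_div_mul_comm, mul_assoc,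
    div_mul_cancel₀ _ (qPoch_succ_ne_zero hq).2, mul_comm]

theorem qHahnSum_zero_right (x : ℕ) : qHahnSum q μ ν x 0 = 1 := by
  simp [qHahnSum, qPoch]

theorem qHahnDualSum_zero_right (x : ℕ) : qHahnDualSum q μ ν x 0 = 1 := by
  simp [qHahnDualSum, dualCoeff, qPoch]

theorem qHahnSum_succ (hμ : μ ≠ 0) (hq : ∀ n, qPoch q q n ≠ 0) (x y : ℕ) :
    qHahnSum q μ ν x (y + 1) = (1 - ν * q ^ (x + y)) * qHahnSum q μ ν x y +
      μ * q ^ y * (q ^ x - 1) * qHahnSum q μ ν (x - 1) y := by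
  set h : ℕ → ℝ := fun s => μ ^ s * qPoch (ν / μ) q s * qPoch μ q (y - s) * qBinom q y s
  have hrhs := sum_range_succ_mul_eq_add_shift
    (fun s => μ ^ s * qPoch (ν / μ) q s * qPoch μ q (y + 1 - s) * qBinom q y s)
    (fun s => (μ * q ^ (y - s) - ν * q ^ y) * h s)
    (fun s => μ ^ s * qPoch (ν / μ) q s * qPoch μ q (y + 1 - s) * qBinom q (y + 1) s)
    (fun s => q ^ (s * x)) y (by simp)
    (fun s hs => by
      rw [qBinom_succ_succ q y s (hq _), pow_succ_mul_qPoch_div_succ hμ, Nat.add_sub_add_right]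
      have hq_pow : q ^ y = q ^ s * q ^ (y - s) := by rw [← pow_add, Nat.add_sub_cancel' hs]
      simp only [h, hq_pow]
      ring)
    (by simp [qBinom_eq_zero_of_lt q y.lt_succ_self])
  simp only [qHahnSum]
  rw [hrhs, mul_sum, mul_sum, ← sum_add_distrib]
  refine sum_congr rfl fun s hs => ?_
  have hs : s ≤ y := mem_range_succ_iff.1 hs
  have hμs : qPoch μ q (y + 1 - s) = qPoch μ q (y - s) * (1 - μ * q ^ (y - s)) := by
    rw [Nat.succ_sub hs, qPoch_succ]
  have hshift :
      q ^ y * (q ^ x - 1) * q ^ (s * (x - 1)) = q ^ (y - s) * (q ^ x - 1) * q ^ (s * x) := by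
    cases x with
    | zero => simp
    | succ x =>
      rw [← Nat.add_sub_cancel' hs, Nat.add_sub_cancel_left, Nat.add_sub_cancel]
      ring
  rw [hμs]
  linear_combination (-(μ * h s)) * hshift

theorem dualCoeff_mul_qPoch_mul_qDescFactorial_succ {s y : ℕ} (hq : qPoch q q (s + 1) ≠ 0)
    (hs : s ≤ y) :
    dualCoeff q μ ν (s + 1) * qPoch (ν * q ^ (s + 1)) q (y + 1 - (s + 1)) *
        qDescFactorial q (y + 1) (s + 1) =
      dualCoeff q μ ν (s + 1) * qPoch (ν * q ^ (s + 1)) q (y - (s + 1)) *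
          (1 - ν * q ^ (y + (s + 1))) * qDescFactorial q y (s + 1) +
        q ^ y * (ν * q ^ s - μ) *
          (dualCoeff q μ ν s * qPoch (ν * q ^ s) q (y - s) * qDescFactorial q y s) := by
  have ha := dualCoeff_succ_mul (μ := μ) (ν := ν) hq
  obtain ⟨m, rfl⟩ := Nat.exists_eq_add_of_le hs
  rw [succ_qDescFactorial_succ, qDescFactorial_succ, Nat.add_sub_add_right, Nat.add_sub_cancel_left]
  cases m with
  | zero =>
    simp only [add_zero, Nat.sub_eq_zero_of_le s.le_succ, qPoch_zero, pow_zero]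
    linear_combination qDescFactorial q s s * ha
  | succ m =>
    rw [show s + (m + 1) - (s + 1) = m by omega, qPoch_succ, add_comm m 1, qPoch_add (ν * q ^ s),
      qPoch_one, show ν * q ^ s * q ^ 1 = ν * q ^ (s + 1) by ring]
    linear_combination (q ^ (m + 1) * (1 - ν * q ^ s) * qPoch (ν * q ^ (s + 1)) q m *
      qDescFactorial q (s + (1 + m)) s) * ha

theorem qHahnDualSum_succ (hq : ∀ n, qPoch q q n ≠ 0) (x y : ℕ) :
    qHahnDualSum q μ ν x (y + 1) = (1 - ν * q ^ (x + y)) * qHahnDualSum q μ ν x y +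
      μ * q ^ y * (q ^ x - 1) * qHahnDualSum q μ ν (x - 1) y := by
  set t : ℕ → ℝ := fun k => dualCoeff q μ ν k * qPoch (ν * q ^ k) q (y - k) * qDescFactorial q y k
  have hrhs := sum_range_succ_mul_eq_add_shift
    (fun k => dualCoeff q μ ν k * qPoch (ν * q ^ k) q (y - k) * (1 - ν * q ^ (y + k)) *
      qDescFactorial q y k)
    (fun k => q ^ y * (ν * q ^ k - μ) * t k)
    (fun k => dualCoeff q μ ν k * qPoch (ν * q ^ k) q (y + 1 - k) * qDescFactorial q (y + 1) k)
    (qDescFactorial q x) y (by simp [dualCoeff, qPoch_succ])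
    (fun s hs => dualCoeff_mul_qPoch_mul_qDescFactorial_succ (hq _) hs)
    (by simp [qDescFactorial_eq_zero_of_lt q y.lt_succ_self])
  have hE : ∀ k, (1 - ν * q ^ (x + y)) * qDescFactorial q x k +
      μ * q ^ y * (q ^ x - 1) * qDescFactorial q (x - 1) k =
      (1 - ν * q ^ (y + k)) * qDescFactorial q x k +
        q ^ y * (ν * q ^ k - μ) * qDescFactorial q x (k + 1) := fun k => by
    linear_combination (-(ν * q ^ y)) * pow_mul_qDescFactorial q x k +
      μ * q ^ y * sub_one_mul_qDescFactorial_pred q x k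
  simp only [qHahnDualSum]
  rw [hrhs, mul_sum, mul_sum, ← sum_add_distrib]
  refine sum_congr rfl fun k _ => ?_
  linear_combination (-t k) * hE k

theorem qHahnSum_eq_qHahnDualSum (hμ : μ ≠ 0) (hq : ∀ n, qPoch q q n ≠ 0) (x y : ℕ) :
    qHahnSum q μ ν x y = qHahnDualSum q μ ν x y := by
  induction y generalizing x with
  | zero => rw [qHahnSum_zero_right, qHahnDualSum_zero_right]
  | succ y ih => rw [qHahnSum_succ hμ hq, qHahnDualSum_succ hq, ih, ih]

theorem sum_phiW_mul_pow_eq_qHahnSum_div (hq : ∀ n, qPoch q q n ≠ 0) (x y : ℕ) :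
    ∑ s ∈ range (y + 1), phiW q μ ν s y * q ^ (s * x) = qHahnSum q μ ν x y / qPoch ν q y := by
  rw [qHahnSum, sum_div]
  refine sum_congr rfl fun s hs => ?_
  rw [phiW, qBinom_eq_div q (mem_range_succ_iff.1 hs) (hq _) (hq _)]
  ring

theorem qHahnDualSum_div {y : ℕ} (hν : qPoch ν q y ≠ 0) (x : ℕ) :
    qHahnDualSum q μ ν x y / qPoch ν q y = ∑ k ∈ range (min x y + 1),
      dualCoeff q μ ν k * qDescFactorial q y k * qDescFactorial q x k / qPoch ν q k := by
  have hterm : ∀ k ≤ y, dualCoeff q μ ν k * qPoch (ν * q ^ k) q (y - k) *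
      qDescFactorial q y k * qDescFactorial q x k / qPoch ν q y =
      dualCoeff q μ ν k * qDescFactorial q y k * qDescFactorial q x k / qPoch ν q k := by
    intro k hk
    have hsplit : qPoch ν q y = qPoch ν q k * qPoch (ν * q ^ k) q (y - k) := by
      rw [← qPoch_add, Nat.add_sub_cancel' hk]
    obtain ⟨hνk, hνky⟩ := mul_ne_zero_iff.1 (hsplit ▸ hν)
    rw [hsplit]
    field_simp
  rw [qHahnDualSum, sum_div, sum_congr rfl fun k hk => hterm k (mem_range_succ_iff.1 hk)]
  refine (sum_subset (range_subset_range.2 (by omega)) fun k hk hkx => ?_).symm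
  simp only [mem_range] at hk hkx
  rw [qDescFactorial_eq_zero_of_lt q (show x < k by omega), mul_zero, zero_div]

end QHahn

/-- Self-duality symmetry of the q-beta-binomial weights. -/
theorem stmt_1 (q mu nu : ℝ) (x y : ℕ) (hmu : mu ≠ 0)
    (hnux : qPoch nu q x ≠ 0) (hnuy : qPoch nu q y ≠ 0) (hqs : ∀ n : ℕ, qPoch q q n ≠ 0) :
    ∑ s ∈ Finset.range (y + 1), phiW q mu nu s y * q ^ (s * x)
      = ∑ t ∈ Finset.range (x + 1), phiW q mu nu t x * q ^ (t * y) := by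
  rw [sum_phiW_mul_pow_eq_qHahnSum_div hqs, sum_phiW_mul_pow_eq_qHahnSum_div hqs,
    qHahnSum_eq_qHahnDualSum hmu hqs, qHahnSum_eq_qHahnDualSum hmu hqs, qHahnDualSum_div hnuy,
    qHahnDualSum_div hnux, min_comm]
  exact sum_congr rfl fun k _ => by ring
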